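/- Let M be the model with worlds s,t where p is true exactly at s, and relation {(s,t),(t,t),(t,s)}; let N be the model with worlds s',t' where p is true exactly at s', and relation {(s',t'),(t',s')}. Both M and N are serial; (M,s) and (N,s') satisfy exactly the same LEA-formulas, yet they are distinguished by the ML-formula □□p (N,s' ⊨ □□p but M,s ⊭ □□p). Consequently, LEA is less expressive than ML on the class of serial models. -/
import Mathlib


/-- The language LEA of essence and accident. -/
inductive LEAForm : Type
  | atom : ℕ → LEAForm
  | neg : LEAForm → LEAForm
  | and : LEAForm → LEAForm → LEAForm
  | ess : LEAForm → LEAForm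

/-- The language ML of modal logic. -/
inductive MLForm : Type
  | atom : ℕ → MLForm
  | neg : MLForm → MLForm
  | and : MLForm → MLForm → MLForm
  | box : MLForm → MLForm

/-- A Kripke model. -/
structure Model (W : Type) where
  R : W → W → Prop
  V : ℕ → W → Prop

/-- Satisfaction for LEA. -/
def satLEA {W : Type} (M : Model W) : W → LEAForm → Prop
  | w, .atom p => M.V p w
  | w, .neg φ => ¬ satLEA M w φ
  | w, .and φ ψ => satLEA M w φ ∧ satLEA M w ψ
  | w, .ess φ => satLEA M w φ → ∀ v, M.R w v → satLEA M v φ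

/-- Satisfaction for ML. -/
def satML {W : Type} (M : Model W) : W → MLForm → Prop
  | w, .atom p => M.V p w
  | w, .neg φ => ¬ satML M w φ
  | w, .and φ ψ => satML M w φ ∧ satML M w ψ
  | w, .box φ => ∀ v, M.R w v → satML M v φ

/-- ML is at least as expressive as LEA on the class C of models. -/
def LEAtoML (C : ∀ W : Type, Model W → Prop) : Prop :=
  ∀ φ : LEAForm, ∃ ψ : MLForm, ∀ (W : Type) [Nonempty W] (M : Model W), C W M →
    ∀ s : W, satLEA M s φ ↔ satML M s ψ

/-- LEA is at least as expressive as ML on the class C of models. -/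
def MLtoLEA (C : ∀ W : Type, Model W → Prop) : Prop :=
  ∀ ψ : MLForm, ∃ φ : LEAForm, ∀ (W : Type) [Nonempty W] (M : Model W), C W M →
    ∀ s : W, satLEA M s φ ↔ satML M s ψ

/-- LEA is less expressive than ML on the class C of models. -/
def LEAlessExp (C : ∀ W : Type, Model W → Prop) : Prop :=
  LEAtoML C ∧ ¬ MLtoLEA C

/-- The model M: worlds s (= false) and t (= true), p (= atom 0) true exactly at s,
relation {(s,t),(t,t),(t,s)}. -/
def M3 : Model Bool :=
  ⟨fun a b => (a = false ∧ b = true) ∨ a = true, fun p w => p = 0 ∧ w = false⟩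

/-- The model N: worlds s' (= false) and t' (= true), p (= atom 0) true exactly at s',
relation {(s',t'),(t',s')}. -/
def N3 : Model Bool := ⟨fun a b => a ≠ b, fun p w => p = 0 ∧ w = false⟩

/-- The class of serial models. -/
def serialC (W : Type) (M : Model W) : Prop := ∀ w, ∃ v, M.R w v


/-- Translation from LEA into ML: ∘φ ↦ ¬(φ ∧ ¬□φ). -/
def tr : LEAForm → MLForm
  | .atom p => .atom p
  | .neg φ => .neg (tr φ)
  | .and φ ψ => .and (tr φ) (tr ψ)
  | .ess φ => .neg (.and (tr φ) (.neg (.box (tr φ))))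

lemma tr_correct {W : Type} (M : Model W) (φ : LEAForm) (s : W) :
    satLEA M s φ ↔ satML M s (tr φ) := by
  induction φ generalizing s with
  | atom p => simp [satLEA, satML, tr]
  | neg φ ih => simp [satLEA, satML, tr, ih]
  | and φ ψ ih1 ih2 => simp [satLEA, satML, tr, ih1, ih2]
  | ess φ ih => simp [satLEA, satML, tr, ih]

lemma equivLEA (φ : LEAForm) :
    (satLEA M3 false φ ↔ satLEA N3 false φ) ∧
    (satLEA M3 true φ ↔ satLEA N3 true φ) := by
  induction φ with
  | atom p => simp [satLEA, M3, N3]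
  | neg φ ih => simp [satLEA, ih.1, ih.2]
  | and φ ψ ih1 ih2 => simp [satLEA, ih1.1, ih1.2, ih2.1, ih2.2]
  | ess φ ih =>
    obtain ⟨h1, h2⟩ := ih
    simp only [satLEA, M3, N3, Bool.forall_bool] at *
    constructor <;> constructor <;> intro h <;> simp_all

theorem stmt3 :
    serialC Bool M3 ∧ serialC Bool N3 ∧
    (∀ φ : LEAForm, satLEA M3 false φ ↔ satLEA N3 false φ) ∧
    satML N3 false (.box (.box (.atom 0))) ∧
    ¬ satML M3 false (.box (.box (.atom 0))) ∧
    LEAlessExp serialC := by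
  have hN : satML N3 false (.box (.box (.atom 0))) := by
    simp [satML, N3, Bool.forall_bool]
  have hM : ¬ satML M3 false (.box (.box (.atom 0))) := by
    intro h
    have := h true (by simp [M3]) true (by simp [M3])
    simp [satML, M3] at this
  refine ⟨fun w => ⟨true, by cases w <;> simp [M3]⟩,
    fun w => ⟨!w, by cases w <;> simp [N3]⟩,
    fun φ => (equivLEA φ).1, hN, hM,
    fun φ => ⟨tr φ, fun W _ M _ s => tr_correct M φ s⟩, ?_⟩
  intro hml
  obtain ⟨φ, hφ⟩ := hml (.box (.box (.atom 0)))
  have e1 := hφ Bool M3 (fun w => ⟨true, by cases w <;> simp [M3]⟩) false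
  have e2 := hφ Bool N3 (fun w => ⟨!w, by cases w <;> simp [N3]⟩) false
  exact hM (e1.mp ((equivLEA φ).1.mpr (e2.mpr hN)))
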